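/- arXiv:2205.02656 — 6 statements merged into one kernel-verified Lean document; each statement's English description precedes it below -/
import Mathlib

section
/- For every finite graph G on n ≥ 2 vertices, the treedepth of G satisfies tw(G) ≤ td(G) ≤ (tw(G)+1) · log₂ n, where tw denotes treewidth (in particular the first inequality tw(G) + 1 ≤ td(G) holds, stated with the convention that treewidth of a graph with an edge is at least 1). -/
structure RootedForest (V : Type) where
  parent : V → Option V
  vdepth : V → ℕ
  vdepth_root : ∀ v, parent v = none → vdepth v = 1
  vdepth_parent : ∀ v p, parent v = some p → vdepth v = vdepth p + 1

namespace RootedForest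

variable {V : Type}

/-- `F.Anc u v` means `u` is an ancestor of `v` (reflexively). -/
def Anc (F : RootedForest V) (u v : V) : Prop :=
  Relation.ReflTransGen (fun a b => F.parent a = some b) v u

/-- ancestors of `u`, including `u` itself. -/
def tail (F : RootedForest V) (u : V) : Set V := {w | F.Anc w u}

/-- descendants of `u`, including `u` itself. -/
def desc (F : RootedForest V) (u : V) : Set V := {w | F.Anc u w}

def comp (F : RootedForest V) (u : V) : Set V := F.tail u ∪ F.desc u

/-- ancestor closure of a set of vertices. -/
def cl (F : RootedForest V) (A : Set V) : Set V := ⋃ u ∈ A, F.tail u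

/-- children of `u`. -/
def chld (F : RootedForest V) (u : V) : Set V := {v | F.parent v = some u}

/-- the forest has depth at most `d`. -/
def DepthLE (F : RootedForest V) (d : ℕ) : Prop := ∀ v, F.vdepth v ≤ d

/-- the forest consists of a single tree. -/
def IsTree (F : RootedForest V) : Prop := ∃ r, ∀ v, F.Anc r v

end RootedForest

/-- `F` is an elimination forest of `G`: every edge joins an ancestor/descendant pair. -/
def SimpleGraph.IsElimForest {V : Type} (G : SimpleGraph V) (F : RootedForest V) : Prop :=
  ∀ u v, G.Adj u v → F.Anc u v ∨ F.Anc v u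

/-- the treedepth of a graph. -/
noncomputable def SimpleGraph.treedepth {V : Type} (G : SimpleGraph V) : ℕ :=
  sInf {d | ∃ F : RootedForest V, G.IsElimForest F ∧ F.DepthLE d}

/-- A tree decomposition of `G` over index type `ι`. -/
structure TreeDecomp {V : Type} (G : SimpleGraph V) (ι : Type) where
  tree : SimpleGraph ι
  isTree : tree.IsTree
  bag : ι → Set V
  covers_vertex : ∀ v, ∃ i, v ∈ bag i
  covers_edge : ∀ u v, G.Adj u v → ∃ i, u ∈ bag i ∧ v ∈ bag i
  bags_connected : ∀ v, (tree.induce {i | v ∈ bag i}).Connected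

/-- the treewidth of a graph. -/
noncomputable def SimpleGraph.treewidth {V : Type} (G : SimpleGraph V) : ℕ :=
  sInf {w | ∃ (ι : Type) (D : TreeDecomp G ι), ∀ i, (D.bag i).ncard ≤ w + 1}

/-!
For the lower bound, the ancestor sets of an elimination forest of depth `d` are the bags of a
tree decomposition whose tree is the forest itself, its roots joined to one extra node; each
bag has at most `d` vertices.

For the upper bound, fix a tree decomposition of width `w` and a vertex set `A`. The sets of
nodes whose bags meet a connected subset of `A` with more than `|A| / 2` vertices are subtrees,
and any two of them intersect, so by the Helly property of subtrees one node `i` lies in all of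
them. Every component of `A` minus the bag of `i` therefore has at most `|A| / 2` vertices.
Stacking the at most `w + 1` vertices of `A` in that bag on top of elimination forests of the
components and recursing gives depth at most `(w + 1) * ⌈log₂ |A|⌉`.
-/

open Finset

namespace RootedForest

variable {V : Type}

section

variable (F : RootedForest V)

def odepth (a : Option V) : ℕ := a.elim 0 F.vdepth

lemma odepth_parent_add_one (v : V) : F.odepth (F.parent v) + 1 = F.vdepth v := by
  cases h : F.parent v with
  | none => simp [odepth, F.vdepth_root v h]
  | some p => simp [odepth, F.vdepth_parent v p h]

lemma one_le_vdepth (v : V) : 1 ≤ F.vdepth v := by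
  rw [← F.odepth_parent_add_one]; omega

lemma some_ne_parent (v : V) : some v ≠ F.parent v := fun h => by
  have := F.odepth_parent_add_one v
  rw [← h, odepth, Option.elim_some] at this
  omega

lemma tail_eq_insert (v : V) : F.tail v = insert v ((F.parent v).elim ∅ F.tail) := by
  ext w
  simp only [tail, Anc, Set.mem_ofPred_eq, Set.mem_insert_iff]
  rw [Relation.ReflTransGen.cases_head_iff]
  cases F.parent v <;> simp [eq_comm, tail, Anc]

lemma ncard_tail_le (v : V) : (F.tail v).ncard ≤ F.vdepth v := by
  rw [F.tail_eq_insert]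
  refine (Set.ncard_insert_le _ _).trans ?_
  cases h : F.parent v with
  | none => simp [F.vdepth_root v h]
  | some p =>
    have := ncard_tail_le p
    simp [F.vdepth_parent v p h, this]
termination_by F.vdepth v
decreasing_by rw [F.vdepth_parent v p h]; omega

/-- `none` is an extra root above the roots of `F`. -/
def toTree : SimpleGraph (Option V) :=
  SimpleGraph.fromEdgeSet (Set.range fun v => s(some v, F.parent v))

lemma toTree_adj_parent (v : V) : F.toTree.Adj (some v) (F.parent v) :=
  (SimpleGraph.fromEdgeSet_adj _).2 ⟨⟨v, rfl⟩, F.some_ne_parent v⟩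

lemma toTree_reachable_none : ∀ a : Option V, F.toTree.Reachable a none
  | none => .refl _
  | some v => (F.toTree_adj_parent v).reachable.trans (toTree_reachable_none (F.parent v))
termination_by a => F.odepth a
decreasing_by
  have := F.odepth_parent_add_one v
  show F.odepth (F.parent v) < F.vdepth v
  omega

lemma isTree_toTree [Finite V] : F.toTree.IsTree := by
  have hinj : Function.Injective fun v => s(some v, F.parent v) := by
    intro v w h
    rcases Sym2.eq_iff.1 h with ⟨hvw, -⟩ | ⟨hv, hw⟩
    · exact Option.some_injective _ hvw
    · have h1 := F.odepth_parent_add_one v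
      have h2 := F.odepth_parent_add_one w
      rw [hw] at h1
      rw [← hv] at h2
      simp only [odepth, Option.elim_some] at h1 h2
      omega
  rw [SimpleGraph.isTree_iff_connected_and_card]
  refine ⟨.mk fun a b => (F.toTree_reachable_none a).trans (F.toTree_reachable_none b).symm, ?_⟩
  have hdiag : Set.range (fun v => s(some v, F.parent v)) \ Sym2.diagSet =
      Set.range fun v => s(some v, F.parent v) := by
    refine sdiff_eq_left.2 (Set.disjoint_left.2 ?_)
    rintro _ ⟨v, rfl⟩ h
    exact F.some_ne_parent v (Sym2.mk_isDiag_iff.1 (Sym2.mem_diagSet.1 h))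
  rw [toTree, SimpleGraph.edgeSet_fromEdgeSet, hdiag, Nat.card_range_of_injective hinj,
    Finite.card_option]

def toTreeDecomp [Finite V] {G : SimpleGraph V} (hG : G.IsElimForest F) :
    TreeDecomp G (Option V) where
  tree := F.toTree
  isTree := F.isTree_toTree
  bag a := a.elim ∅ F.tail
  covers_vertex v := ⟨some v, .refl⟩
  covers_edge u v huv := by
    rcases hG u v huv with h | h
    · exact ⟨some v, h, .refl⟩
    · exact ⟨some u, .refl, h⟩
  bags_connected x := by
    have hx : some x ∈ {a : Option V | x ∈ a.elim ∅ F.tail} := Relation.ReflTransGen.refl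
    rw [SimpleGraph.connected_iff_exists_forall_reachable]
    refine ⟨⟨some x, hx⟩, ?_⟩
    rintro ⟨_ | w, hw⟩
    · exact absurd hw (Set.notMem_empty x)
    induction hw using Relation.ReflTransGen.head_induction_on with
    | refl => exact .refl _
    | @head w p hwp hpx ih =>
      refine ih.trans (SimpleGraph.Adj.reachable ?_).symm
      simpa only [SimpleGraph.comap_adj, Function.Embedding.subtype_apply, hwp] using
        F.toTree_adj_parent w

lemma exists_treeDecomp [Finite V] {G : SimpleGraph V} (hG : G.IsElimForest F) {w : ℕ}
    (hw : F.DepthLE (w + 1)) :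
    ∃ (ι : Type) (D : TreeDecomp G ι), ∀ i, (D.bag i).ncard ≤ w + 1 := by
  refine ⟨Option V, F.toTreeDecomp hG, ?_⟩
  rintro (_ | v)
  · simp [toTreeDecomp]
  · exact (F.ncard_tail_le v).trans (hw v)

end

def SupportedOn (F : RootedForest V) (A : Finset V) : Prop :=
  ∀ v p, F.parent v = some p → v ∈ A ∧ p ∈ A

def discrete (V : Type) : RootedForest V where
  parent _ := none
  vdepth _ := 1
  vdepth_root _ _ := rfl
  vdepth_parent _ _ h := by cases h

lemma anc_of_parent_eq {F F' : RootedForest V} {A : Finset V} (hF : F.SupportedOn A)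
    (hF' : ∀ v ∈ A, ∀ p, F.parent v = some p → F'.parent v = some p) {u v : V}
    (hv : v ∈ A) (huv : F.Anc u v) : F'.Anc u v := by
  induction huv using Relation.ReflTransGen.head_induction_on with
  | refl => exact .refl
  | head hvp _ ih => exact .head (hF' _ hv _ hvp) (ih (hF _ _ hvp).2)

section DecidableEq

variable [DecidableEq V]

def addRoot (F : RootedForest V) {A : Finset V} (hF : F.SupportedOn A) (x : V) (hx : x ∉ A) :
    RootedForest V where
  parent v := if v ∈ A then some ((F.parent v).getD x) else none
  vdepth v := if v ∈ A then F.vdepth v + 1 else 1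
  vdepth_root v h := by
    split_ifs at h ⊢ with hv
    rfl
  vdepth_parent v p h := by
    split_ifs at h with hv
    cases hvq : F.parent v with
    | none =>
      rw [hvq, Option.getD_none, Option.some_inj] at h
      subst h
      simp [hv, hx, F.vdepth_root v hvq]
    | some q =>
      rw [hvq, Option.getD_some, Option.some_inj] at h
      subst h
      simp [hv, (hF v q hvq).2, F.vdepth_parent v q hvq]

def piecewise (F₁ F₂ : RootedForest V) {A₁ A₂ : Finset V} (h₁ : F₁.SupportedOn A₁)
    (h₂ : F₂.SupportedOn A₂) (hA : Disjoint A₁ A₂) : RootedForest V where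
  parent v := if v ∈ A₁ then F₁.parent v else F₂.parent v
  vdepth v := if v ∈ A₁ then F₁.vdepth v else F₂.vdepth v
  vdepth_root v h := by
    split_ifs at h ⊢
    · exact F₁.vdepth_root v h
    · exact F₂.vdepth_root v h
  vdepth_parent v p h := by
    by_cases hv : v ∈ A₁
    · rw [if_pos hv] at h
      simp [hv, (h₁ v p h).2, F₁.vdepth_parent v p h]
    · rw [if_neg hv] at h
      simp [hv, Finset.disjoint_right.1 hA (h₂ v p h).2, F₂.vdepth_parent v p h]

end DecidableEq

end RootedForest

namespace SimpleGraph

section ElimForestOn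

variable {V : Type} (G : SimpleGraph V)

def IsElimForestOn (A : Finset V) (F : RootedForest V) : Prop :=
  F.SupportedOn A ∧ ∀ u ∈ A, ∀ v ∈ A, G.Adj u v → F.Anc u v ∨ F.Anc v u

def HasElimForestOn (A : Finset V) (d : ℕ) : Prop :=
  ∃ F, G.IsElimForestOn A F ∧ ∀ v ∈ A, F.vdepth v ≤ d

variable {G}

lemma hasElimForestOn_empty : G.HasElimForestOn ∅ 0 :=
  ⟨RootedForest.discrete V, ⟨(fun _ _ h => by cases h), by simp⟩, by simp⟩

lemma HasElimForestOn.mono {A : Finset V} {d d' : ℕ} (h : G.HasElimForestOn A d) (hd : d ≤ d') :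
    G.HasElimForestOn A d' :=
  let ⟨F, hF, hFd⟩ := h
  ⟨F, hF, fun v hv => (hFd v hv).trans hd⟩

lemma HasElimForestOn.exists_isElimForest {d : ℕ} [Fintype V] (h : G.HasElimForestOn .univ d) :
    ∃ F : RootedForest V, G.IsElimForest F ∧ F.DepthLE d :=
  let ⟨F, ⟨_, hF⟩, hFd⟩ := h
  ⟨F, fun u v huv => hF u (Finset.mem_univ u) v (Finset.mem_univ v) huv,
    fun v => hFd v (Finset.mem_univ v)⟩

section DecidableEq

variable [DecidableEq V]

lemma HasElimForestOn.insert {A : Finset V} {d : ℕ} {x : V} (hx : x ∉ A)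
    (h : G.HasElimForestOn A d) : G.HasElimForestOn (insert x A) (d + 1) := by
  obtain ⟨F, ⟨hsupp, hF⟩, hFd⟩ := h
  let F' := F.addRoot hsupp x hx
  have hlift : ∀ {u v}, v ∈ A → F.Anc u v → F'.Anc u v :=
    RootedForest.anc_of_parent_eq hsupp fun v hv p hvp => by
      simp [F', RootedForest.addRoot, hv, hvp]
  have hx_anc : ∀ v ∈ A, F'.Anc x v := by
    intro v hv
    induction hd : F.vdepth v using Nat.strong_induction_on generalizing v with
    | _ n ih =>
      cases hvp : F.parent v with
      | none => exact .single (by simp [F', RootedForest.addRoot, hv, hvp])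
      | some p =>
        have hpA := (hsupp v p hvp).2
        refine .head (by simp [F', RootedForest.addRoot, hv, hvp]) (ih _ ?_ p hpA rfl)
        rw [← hd, F.vdepth_parent v p hvp]
        omega
  refine ⟨F', ⟨fun v p hvp => ?_, fun u hu v hv huv => ?_⟩, fun v hv => ?_⟩
  · by_cases hv : v ∈ A
    · cases hvq : F.parent v <;>
        simp_all [F', RootedForest.addRoot, hsupp v]
    · simp [F', RootedForest.addRoot, hv] at hvp
  · rcases Finset.mem_insert.1 hu with rfl | huA <;> rcases Finset.mem_insert.1 hv with rfl | hvA
    · exact Or.inl .refl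
    · exact Or.inl (hx_anc v hvA)
    · exact Or.inr (hx_anc u huA)
    · exact (hF u huA v hvA huv).imp (hlift hvA) (hlift huA)
  · rcases Finset.mem_insert.1 hv with rfl | hv
    · simp [F', RootedForest.addRoot, hx]
    · simpa [F', RootedForest.addRoot, hv] using hFd v hv

lemma HasElimForestOn.union {A₁ A₂ : Finset V} {d : ℕ} (hA : Disjoint A₁ A₂)
    (hadj : ∀ u ∈ A₁, ∀ v ∈ A₂, ¬G.Adj u v) (h₁ : G.HasElimForestOn A₁ d)
    (h₂ : G.HasElimForestOn A₂ d) : G.HasElimForestOn (A₁ ∪ A₂) d := by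
  obtain ⟨F₁, ⟨hsupp₁, hF₁⟩, hF₁d⟩ := h₁
  obtain ⟨F₂, ⟨hsupp₂, hF₂⟩, hF₂d⟩ := h₂
  let F := F₁.piecewise F₂ hsupp₁ hsupp₂ hA
  have hlift₁ : ∀ {u v}, v ∈ A₁ → F₁.Anc u v → F.Anc u v :=
    RootedForest.anc_of_parent_eq hsupp₁ fun v hv p hvp => by
      simp [F, RootedForest.piecewise, hv, hvp]
  have hlift₂ : ∀ {u v}, v ∈ A₂ → F₂.Anc u v → F.Anc u v :=
    RootedForest.anc_of_parent_eq hsupp₂ fun v hv p hvp => by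
      simp [F, RootedForest.piecewise, Finset.disjoint_right.1 hA hv, hvp]
  refine ⟨F, ⟨fun v p hvp => ?_, fun u hu v hv huv => ?_⟩, fun v hv => ?_⟩
  · by_cases hv : v ∈ A₁
    · simp only [F, RootedForest.piecewise, if_pos hv] at hvp
      exact (hsupp₁ v p hvp).imp (Finset.mem_union_left _) (Finset.mem_union_left _)
    · simp only [F, RootedForest.piecewise, if_neg hv] at hvp
      exact (hsupp₂ v p hvp).imp (Finset.mem_union_right _) (Finset.mem_union_right _)
  · rcases Finset.mem_union.1 hu with hu | hu <;> rcases Finset.mem_union.1 hv with hv | hv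
    · exact (hF₁ u hu v hv huv).imp (hlift₁ hv) (hlift₁ hu)
    · exact absurd huv (hadj u hu v hv)
    · exact absurd huv.symm (hadj v hv u hu)
    · exact (hF₂ u hu v hv huv).imp (hlift₂ hv) (hlift₂ hu)
  · rcases Finset.mem_union.1 hv with hv | hv
    · simpa [F, RootedForest.piecewise, hv] using hF₁d v hv
    · simpa [F, RootedForest.piecewise, Finset.disjoint_right.1 hA hv] using hF₂d v hv

lemma HasElimForestOn.card_add {A : Finset V} {d : ℕ} (h : G.HasElimForestOn A d)
    (S : Finset V) : G.HasElimForestOn (S ∪ A) (#S + d) := by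
  induction S using Finset.induction_on with
  | empty => simpa using h
  | insert x S hxS ih =>
    rw [Finset.insert_union, Finset.card_insert_of_notMem hxS]
    by_cases hx : x ∈ S ∪ A
    · rw [Finset.insert_eq_of_mem hx]
      exact ih.mono (by omega)
    · simpa [add_right_comm] using ih.insert hx

end DecidableEq

lemma hasElimForestOn_card (A : Finset V) : G.HasElimForestOn A #A := by
  classical
  simpa using hasElimForestOn_empty.card_add A

lemma hasElimForestOn_of_forall_connected {d : ℕ} (U : Finset V)
    (h : ∀ S ⊆ U, (G.induce (S : Set V)).Connected → G.HasElimForestOn S d) :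
    G.HasElimForestOn U d := by
  classical
  induction U using Finset.strongInduction with
  | H U ih =>
  obtain rfl | ⟨v, hv⟩ := U.eq_empty_or_nonempty
  · exact hasElimForestOn_empty.mono (Nat.zero_le d)
  set C := U.filter fun u => ∃ p : G.Walk v u, ∀ x ∈ p.support, x ∈ U
  have hvC : v ∈ C := Finset.mem_filter.2 ⟨hv, .nil, by simpa using hv⟩
  have hCU : C ⊆ U := Finset.filter_subset _ _
  have hclosed : ∀ u ∈ C, ∀ y ∈ U, G.Adj u y → y ∈ C := by
    intro u hu y hy huy
    obtain ⟨hu, p, hp⟩ := Finset.mem_filter.1 hu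
    refine Finset.mem_filter.2 ⟨hy, p.concat huy, fun x hx => ?_⟩
    rw [Walk.support_concat, List.mem_append, List.mem_singleton] at hx
    exact hx.elim (hp x) (· ▸ hy)
  have hCconn : (G.induce (C : Set V)).Connected := by
    rw [connected_iff_exists_forall_reachable]
    refine ⟨⟨v, hvC⟩, fun ⟨u, hu⟩ => ?_⟩
    obtain ⟨-, p, hp⟩ := Finset.mem_filter.1 hu
    have hpC : ∀ x ∈ p.support, x ∈ (C : Set V) := fun x hx =>
      Finset.mem_filter.2 ⟨hp x hx, p.takeUntil x hx,
        fun y hy => hp y (p.support_takeUntil_subset_support hx hy)⟩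
    exact (p.induce _ hpC).reachable
  have hsplit : U = C ∪ (U \ C) := (Finset.union_sdiff_of_subset hCU).symm
  rw [hsplit]
  refine HasElimForestOn.union Finset.disjoint_sdiff (fun u hu y hy huy => ?_)
    (h C hCU hCconn) (ih _ (Finset.sdiff_ssubset hCU ⟨v, hvC⟩) fun S hS => h S ?_)
  · exact (Finset.mem_sdiff.1 hy).2 (hclosed u hu y (Finset.mem_sdiff.1 hy).1 huy)
  · exact hS.trans Finset.sdiff_subset

end ElimForestOn

section PathConvex

variable {ι : Type} {T : SimpleGraph ι}

def IsPathConvex (T : SimpleGraph ι) (X : Set ι) : Prop :=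
  ∀ ⦃a b⦄ (p : T.Walk a b), p.IsPath → a ∈ X → b ∈ X → ∀ x ∈ p.support, x ∈ X

lemma IsPathConvex.inter {X Y : Set ι} (hX : T.IsPathConvex X) (hY : T.IsPathConvex Y) :
    T.IsPathConvex (X ∩ Y) :=
  fun _ _ p hp ha hb x hx => ⟨hX p hp ha.1 hb.1 x hx, hY p hp ha.2 hb.2 x hx⟩

lemma IsAcyclic.isPathConvex (hT : T.IsAcyclic) {X : Set ι} (hX : (T.induce X).Preconnected) :
    T.IsPathConvex X := by
  classical
  intro a b p hp ha hb x hx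
  obtain ⟨q⟩ := hX ⟨a, ha⟩ ⟨b, hb⟩
  let q' := q.map (Embedding.induce X).toHom
  have hpq : p = q'.bypass := congrArg Subtype.val
    ((hT.subsingleton_path a b).elim ⟨p, hp⟩ ⟨q'.bypass, q'.bypass_isPath⟩)
  have hx' := q'.support_bypass_subset_support (hpq ▸ hx)
  obtain ⟨y, -, rfl⟩ := List.mem_map.1 (by rwa [Walk.support_map] at hx')
  exact y.2

lemma Walk.exists_mem_inter {X Z : Set ι} {a b : ι} (p : T.Walk a b)
    (hp : ∀ x ∈ p.support, x ∈ X ∪ Z) (ha : a ∈ X) (hb : b ∈ Z)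
    (hXZ : ∀ u v, T.Adj u v → u ∈ X → v ∈ Z → u ∈ Z ∨ v ∈ X) :
    ∃ x ∈ p.support, x ∈ X ∩ Z := by
  induction p with
  | nil => exact ⟨_, List.mem_singleton_self _, ha, hb⟩
  | @cons u u' _ huu' p ih =>
    by_cases hu : u ∈ Z
    · exact ⟨u, p.support.mem_cons_self, ha, hu⟩
    have hu' : u' ∈ X := (hp u' (by simp)).elim id fun h => (hXZ _ _ huu' ha h).resolve_left hu
    obtain ⟨x, hx, hxXZ⟩ := ih (fun x hx => hp x (List.mem_cons_of_mem _ hx)) hu' hb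
    exact ⟨x, List.mem_cons_of_mem _ hx, hxXZ⟩

lemma Preconnected.inter_inter_nonempty (hT : T.Preconnected) {X Y Z : Set ι}
    (hX : T.IsPathConvex X) (hY : T.IsPathConvex Y) (hZ : T.IsPathConvex Z)
    (hXY : (X ∩ Y).Nonempty) (hYZ : (Y ∩ Z).Nonempty) (hXZ : (X ∩ Z).Nonempty) :
    (X ∩ Y ∩ Z).Nonempty := by
  classical
  obtain ⟨a, haX, haY⟩ := hXY
  obtain ⟨b, hbY, hbZ⟩ := hYZ
  obtain ⟨c, hcX, hcZ⟩ := hXZ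
  obtain ⟨pac, hpac⟩ := hT.exists_isPath a c
  obtain ⟨pcb, hpcb⟩ := hT.exists_isPath c b
  let p := (pac.append pcb).bypass
  have hpXZ : ∀ x ∈ p.support, x ∈ X ∪ Z := by
    intro x hx
    rcases (Walk.mem_support_append_iff _ _).1 ((pac.append pcb).support_bypass_subset_support hx)
      with h | h
    · exact Or.inl (hX pac hpac haX hcX x h)
    · exact Or.inr (hZ pcb hpcb hcZ hbZ x h)
  -- an edge from `X` to `Z` has an endpoint in both, since the paths from its ends to `c` nest
  have hedge : ∀ u v, T.Adj u v → u ∈ X → v ∈ Z → u ∈ Z ∨ v ∈ X := by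
    intro u v huv hu hv
    obtain ⟨q, hq⟩ := hT.exists_isPath u c
    by_cases hvq : v ∈ q.support
    · exact Or.inr (hX q hq hu hcX v hvq)
    · exact Or.inl (hZ (q.cons huv.symm) (hq.cons hvq) hv hcZ u (by simp))
  obtain ⟨x, hxp, hxX, hxZ⟩ := p.exists_mem_inter hpXZ haX hbZ hedge
  exact ⟨x, ⟨hxX, hY p (pac.append pcb).bypass_isPath haY hbY x hxp⟩, hxZ⟩

lemma Preconnected.inter_biInter_nonempty (hT : T.Preconnected) {κ : Type} [DecidableEq κ]
    (s : Finset κ) (X : κ → Set ι) (hX : ∀ k ∈ s, T.IsPathConvex (X k))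
    (hXX : ∀ k ∈ s, ∀ l ∈ s, (X k ∩ X l).Nonempty) {Y : Set ι} (hY : T.IsPathConvex Y)
    (hYne : Y.Nonempty) (hYX : ∀ k ∈ s, (Y ∩ X k).Nonempty) :
    (Y ∩ ⋂ k ∈ s, X k).Nonempty := by
  induction s using Finset.induction_on generalizing Y with
  | empty => simpa using hYne
  | insert a s _ ih =>
    simp only [Finset.mem_insert, forall_eq_or_imp] at hX hXX hYX
    rw [Finset.set_biInter_insert, ← Set.inter_assoc]
    exact ih hX.2 (fun k hk l hl => (hXX.2 k hk).2 l hl) (hY.inter hX.1) hYX.1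
      fun k hk => hT.inter_inter_nonempty hY hX.1 (hX.2 k hk) hYX.1 ((hXX.1).2 k hk) (hYX.2 k hk)

end PathConvex

end SimpleGraph

namespace TreeDecomp

variable {V ι : Type} {G : SimpleGraph V} (D : TreeDecomp G ι)

def nodesMeeting (S : Set V) : Set ι := {i | ∃ x ∈ S, x ∈ D.bag i}

lemma connected_nodesMeeting_support {a b : V} (p : G.Walk a b) :
    (D.tree.induce (D.nodesMeeting {x | x ∈ p.support})).Connected := by
  induction p with
  | @nil u =>
    have hnil : D.nodesMeeting {x | x ∈ (SimpleGraph.Walk.nil : G.Walk u u).support} =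
        {i | u ∈ D.bag i} := by
      ext i
      simp [nodesMeeting]
    exact hnil ▸ D.bags_connected u
  | @cons u u' _ huu' p ih =>
    have hunion : D.nodesMeeting {x | x ∈ (p.cons huu').support} =
        {i | u ∈ D.bag i} ∪ D.nodesMeeting {x | x ∈ p.support} := by
      ext i
      simp [nodesMeeting]
    obtain ⟨i, hui, hu'i⟩ := D.covers_edge u u' huu'
    rw [hunion]
    exact SimpleGraph.induce_union_connected (D.bags_connected u).preconnected ih.preconnected
      ⟨i, hui, u', p.start_mem_support, hu'i⟩

lemma connected_nodesMeeting {S : Set V} (hS : (G.induce S).Connected) :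
    (D.tree.induce (D.nodesMeeting S)).Connected := by
  obtain ⟨⟨x, hx⟩⟩ := hS.nonempty
  obtain ⟨i, hi⟩ := D.covers_vertex x
  refine SimpleGraph.induce_connected_of_patches i ⟨x, hx, hi⟩ fun {j} ⟨y, hy, hj⟩ => ?_
  obtain ⟨q⟩ := hS.preconnected ⟨x, hx⟩ ⟨y, hy⟩
  let p := q.map (SimpleGraph.Embedding.induce S).toHom
  have hpS : {z | z ∈ p.support} ⊆ S := by
    intro z hz
    obtain ⟨z, -, rfl⟩ := List.mem_map.1 (by rwa [SimpleGraph.Walk.support_map] at hz)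
    exact z.2
  refine ⟨D.nodesMeeting {z | z ∈ p.support}, fun k ⟨z, hz, hk⟩ => ⟨z, hpS hz, hk⟩,
    ⟨x, p.start_mem_support, hi⟩, ⟨y, p.end_mem_support, hj⟩,
    (D.connected_nodesMeeting_support p).preconnected _ _⟩

theorem exists_balanced_bag {A : Finset V} (hA : A.Nonempty) :
    ∃ i, ∀ S ⊆ A, (∀ x ∈ S, x ∉ D.bag i) → (G.induce (S : Set V)).Connected →
      2 * #S ≤ #A := by
  classical
  let 𝒮 := A.powerset.filter fun S => #A < 2 * #S ∧ (G.induce (S : Set V)).Connected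
  have hconvex : ∀ S ∈ 𝒮, D.tree.IsPathConvex (D.nodesMeeting S) := fun S hS =>
    D.isTree.isAcyclic.isPathConvex (D.connected_nodesMeeting (mem_filter.1 hS).2.2).preconnected
  have hmeet : ∀ S ∈ 𝒮, ∀ S' ∈ 𝒮, (D.nodesMeeting S ∩ D.nodesMeeting S').Nonempty := by
    intro S hS S' hS'
    simp only [𝒮, mem_filter, mem_powerset] at hS hS'
    obtain ⟨x, hx⟩ := inter_nonempty_of_card_lt_card_add_card hS.1 hS'.1 (by omega)
    obtain ⟨hxS, hxS'⟩ := mem_inter.1 hx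
    obtain ⟨i, hi⟩ := D.covers_vertex x
    exact ⟨i, ⟨x, hxS, hi⟩, ⟨x, hxS', hi⟩⟩
  obtain ⟨x, -⟩ := hA
  obtain ⟨i₀, -⟩ := D.covers_vertex x
  obtain ⟨i, -, hi⟩ := D.isTree.connected.preconnected.inter_biInter_nonempty 𝒮 _ hconvex
    hmeet (Y := Set.univ) (fun _ _ _ _ _ _ _ _ => trivial) ⟨i₀, trivial⟩
    fun S hS => by simpa using hmeet S hS S hS
  refine ⟨i, fun S hSA hSi hS => ?_⟩
  by_contra hlt
  have hS𝒮 : S ∈ 𝒮 := mem_filter.2 ⟨mem_powerset.2 hSA, by omega, hS⟩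
  obtain ⟨x, hxS, hxi⟩ := Set.mem_iInter₂.1 hi S hS𝒮
  exact hSi x hxS hxi

theorem hasElimForestOn [Finite V] {w : ℕ} (hw : ∀ i, (D.bag i).ncard ≤ w + 1)
    (A : Finset V) (hA : 2 ≤ #A) : G.HasElimForestOn A ((w + 1) * Nat.clog 2 #A) := by
  classical
  induction A using Finset.strongInduction with
  | H A ih =>
  rcases hA.eq_or_lt with h2 | h3
  -- here `clog 2 #A = 1` leaves no room for a bag above a recursive call
  · obtain ⟨a, b, hab, rfl⟩ := card_eq_two.1 h2.symm
    rw [← h2, Nat.clog_eq_one le_rfl le_rfl, mul_one]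
    by_cases hadj : G.Adj a b
    · obtain ⟨i, hai, hbi⟩ := D.covers_edge a b hadj
      have : 2 ≤ (D.bag i).ncard := by
        rw [← Set.ncard_pair hab]
        exact Set.ncard_le_ncard (Set.pair_subset hai hbi) (Set.toFinite _)
      exact (SimpleGraph.hasElimForestOn_card _).mono (by rw [← h2]; linarith [hw i])
    · rw [insert_eq]
      have h₁ (c : V) : G.HasElimForestOn {c} (w + 1) :=
        (SimpleGraph.hasElimForestOn_card _).mono (by simp)
      exact .union (disjoint_singleton.2 hab) (by simpa using hadj) (h₁ a) (h₁ b)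
  set L := Nat.clog 2 #A
  have hL : 2 ≤ L := by
    by_contra! h
    have : #A ≤ 2 := by simpa using (Nat.clog_le_iff_le_pow one_lt_two).1 (Nat.le_of_lt_succ h)
    omega
  have hAL : #A ≤ 2 ^ L := Nat.le_pow_clog one_lt_two _
  obtain ⟨i, hi⟩ := D.exists_balanced_bag (A := A) (card_pos.1 (by omega))
  have hrest : G.HasElimForestOn (A.filter (· ∉ D.bag i)) ((w + 1) * (L - 1)) := by
    refine SimpleGraph.hasElimForestOn_of_forall_connected _ fun S hS hconn => ?_
    have hSA : S ⊆ A := hS.trans (filter_subset _ _)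
    have h2S : 2 * #S ≤ #A := hi S hSA (fun x hx => (mem_filter.1 (hS hx)).2) hconn
    rcases le_or_gt #S 1 with h1 | h1
    · exact (SimpleGraph.hasElimForestOn_card S).mono (h1.trans (Nat.one_le_iff_ne_zero.2
        (Nat.mul_ne_zero (by omega) (by omega))))
    · refine (ih S (ssubset_of_subset_of_ne hSA (by rintro rfl; omega)) h1).mono
        (Nat.mul_le_mul_left _ (Nat.clog_le_of_le_pow ?_))
      have : 2 ^ L = 2 * 2 ^ (L - 1) := by rw [← pow_succ']; congr 1; omega
      omega
  have hbag : #(A.filter (· ∈ D.bag i)) ≤ w + 1 :=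
    (Set.ncard_coe_finset _).symm.trans_le
      ((Set.ncard_le_ncard (fun x hx => (mem_filter.1 hx).2) (Set.toFinite _)).trans (hw i))
  have := hrest.card_add (A.filter (· ∈ D.bag i))
  rw [filter_union_filter_not_eq] at this
  refine this.mono ?_
  calc #(A.filter (· ∈ D.bag i)) + (w + 1) * (L - 1) ≤ (w + 1) + (w + 1) * (L - 1) := by omega
    _ = (w + 1) * L := by rw [add_comm, ← mul_add_one, Nat.sub_add_cancel (by omega)]

end TreeDecomp

namespace SimpleGraph

variable {V : Type} [Fintype V] (G : SimpleGraph V)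

lemma exists_isElimForest :
    ∃ F : RootedForest V, G.IsElimForest F ∧ F.DepthLE (Fintype.card V) := by
  classical
  simpa using (G.hasElimForestOn_card univ).exists_isElimForest

theorem treewidth_add_one_le_treedepth [Nonempty V] : G.treewidth + 1 ≤ G.treedepth := by
  obtain ⟨F₀, hF₀⟩ := G.exists_isElimForest
  obtain ⟨F, hF, hFd⟩ : G.treedepth ∈ _ := Nat.sInf_mem ⟨_, F₀, hF₀⟩
  have h1 : 1 ≤ G.treedepth := (F.one_le_vdepth (Classical.arbitrary V)).trans (hFd _)
  have : G.treewidth ≤ G.treedepth - 1 :=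
    Nat.sInf_le (F.exists_treeDecomp hF (by rwa [Nat.sub_add_cancel h1]))
  omega

theorem treedepth_le_treewidth_add_one_mul_clog (hn : 2 ≤ Fintype.card V) :
    G.treedepth ≤ (G.treewidth + 1) * Nat.clog 2 (Fintype.card V) := by
  classical
  obtain ⟨F₀, hF₀, hF₀d⟩ := G.exists_isElimForest
  obtain ⟨ι, D, hD⟩ : G.treewidth ∈ _ := Nat.sInf_mem ⟨_, F₀.exists_treeDecomp hF₀
    (w := Fintype.card V - 1) (by rwa [Nat.sub_add_cancel (by omega)])⟩
  obtain ⟨F, hF, hFd⟩ := (D.hasElimForestOn hD univ (by rwa [card_univ])).exists_isElimForest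
  exact Nat.sInf_le ⟨F, hF, by rwa [card_univ] at hFd⟩

end SimpleGraph

theorem treewidth_lt_treedepth_le_log {V : Type} [Fintype V] (G : SimpleGraph V)
    (hn : 2 ≤ Fintype.card V) :
    G.treewidth + 1 ≤ G.treedepth ∧
    G.treedepth ≤ (G.treewidth + 1) * Nat.clog 2 (Fintype.card V) :=
  have : Nonempty V := Fintype.card_pos_iff.1 (by omega)
  ⟨G.treewidth_add_one_le_treedepth, G.treedepth_le_treewidth_add_one_mul_clog hn⟩
end

section
/- Let G be a connected graph of treedepth at most d and let T be an arbitrary elimination tree of G (possibly of depth larger than d). Then there exists an elimination tree R of G of depth at most d such that for every vertex u of G and every pair of distinct children v₁, v₂ of u in T, it holds that cl_R(comp_T[v₁]) ∩ cl_R(comp_T[v₂]) = cl_R(tail_T[u]). -/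
/-! Start from an elimination forest `F` of depth `≤ d` and keep, among the ancestor pairs
`x ≤_F y`, only those for which `y` reaches `x` in `G` inside the `F`-subtree of `x`. This is
again a tree order, of depth at most that of `F`; it still covers every edge, and now every subtree
induces a connected subgraph of `G`. If `x` lies above `a₁ ∈ tree_T[v₁]` and `a₂ ∈ tree_T[v₂]` in
this new forest `R`, its subtree contains a walk from `a₁` to `a₂`; since `T` is an elimination
forest, such a walk leaves `tree_T[v₁]` only through `tail_T[u]`, so `x ∈ cl_R(tail_T[u])`. -/

namespace RootedForest

variable {V : Type} (F : RootedForest V) {u v v₁ v₂ w x y : V}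

theorem anc_refl (v : V) : F.Anc v v := .refl

theorem anc_trans (h₁ : F.Anc x y) (h₂ : F.Anc y v) : F.Anc x v := h₂.trans h₁

theorem anc_iff_of_parent (hv : F.parent v = some u) : F.Anc w v ↔ w = v ∨ F.Anc w u := by
  refine ⟨fun h => ?_, ?_⟩
  · rcases h.cases_head with rfl | ⟨p, hp, hpw⟩
    · exact .inl rfl
    · rw [hv, Option.some_inj] at hp
      exact .inr (hp ▸ hpw)
  · rintro (rfl | h)
    · exact F.anc_refl w
    · exact .head hv h

theorem eq_of_anc_of_parent_eq_none (hv : F.parent v = none) (h : F.Anc w v) : w = v := by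
  rcases h.cases_head with rfl | ⟨p, hp, -⟩
  · rfl
  · simp [hv] at hp

theorem vdepth_le_of_anc (h : F.Anc x y) : F.vdepth x ≤ F.vdepth y := by
  induction h with
  | refl => rfl
  | tail _ hp ih =>
    have := F.vdepth_parent _ _ hp
    omega

theorem anc_antisymm (h₁ : F.Anc x y) (h₂ : F.Anc y x) : x = y := by
  rcases h₁.cases_head with rfl | ⟨p, hp, hpx⟩
  · rfl
  · have := F.vdepth_le_of_anc hpx
    have := F.vdepth_le_of_anc h₂
    have := F.vdepth_parent y p hp
    omega

theorem anc_total_of_anc (hx : F.Anc x v) (hy : F.Anc y v) : F.Anc x y ∨ F.Anc y x := by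
  induction hy with
  | refl => exact .inl hx
  | @tail a b _ hab ih =>
    rcases ih with h | h
    · rcases (F.anc_iff_of_parent hab).mp h with rfl | h
      · exact .inr (.single hab)
      · exact .inl h
    · exact .inr (h.tail hab)

theorem exists_anc_parent_eq_none (v : V) : ∃ ρ, F.Anc ρ v ∧ F.parent ρ = none := by
  induction h : F.vdepth v using Nat.strong_induction_on generalizing v with
  | _ n ih =>
    cases hv : F.parent v with
    | none => exact ⟨v, F.anc_refl v, hv⟩
    | some p =>
      have := F.vdepth_parent v p hv
      obtain ⟨ρ, hρ, hρ'⟩ := ih _ (by omega) p rfl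
      exact ⟨ρ, .head hv hρ, hρ'⟩

theorem encard_tail (v : V) : (F.tail v).encard = F.vdepth v := by
  induction h : F.vdepth v using Nat.strong_induction_on generalizing v with
  | _ n ih =>
    cases hv : F.parent v with
    | none =>
      have htail : F.tail v = {v} :=
        Set.ext fun w => ⟨F.eq_of_anc_of_parent_eq_none hv, fun hw => hw ▸ F.anc_refl v⟩
      rw [htail, Set.encard_singleton, ← h, F.vdepth_root v hv]; rfl
    | some p =>
      have hp := F.vdepth_parent v p hv
      have htail : F.tail v = insert v (F.tail p) := Set.ext fun w => F.anc_iff_of_parent hv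
      have hvp : v ∉ F.tail p := fun hv' => by
        have := F.vdepth_le_of_anc hv'
        omega
      rw [htail, Set.encard_insert_of_notMem hvp, ih _ (by omega) p rfl, ← h, hp]
      push_cast; rfl

theorem mem_cl {A : Set V} : x ∈ F.cl A ↔ ∃ a ∈ A, F.Anc x a := by
  simp [cl, tail]

theorem comp_eq_of_parent (hv : F.parent v = some u) : F.comp v = F.tail u ∪ F.desc v := by
  ext w
  simp only [comp, tail, desc, Set.mem_union, Set.mem_ofPred_eq, F.anc_iff_of_parent hv]
  constructor
  · rintro ((rfl | h) | h)
    exacts [.inr (F.anc_refl w), .inl h, .inr h]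
  · rintro (h | h)
    exacts [.inl (.inr h), .inr h]

theorem cl_union (A B : Set V) : F.cl (A ∪ B) = F.cl A ∪ F.cl B :=
  Set.biUnion_union A B F.tail

theorem eq_of_anc_of_parent_eq (h₁ : F.parent v₁ = some u) (h₂ : F.parent v₂ = some u)
    (h : F.Anc v₁ v₂) : v₁ = v₂ := by
  refine ((F.anc_iff_of_parent h₂).mp h).resolve_right fun hu => ?_
  have := F.vdepth_le_of_anc hu
  have := F.vdepth_parent v₁ u h₁
  omega

theorem disjoint_desc_of_parent_eq (h₁ : F.parent v₁ = some u) (h₂ : F.parent v₂ = some u)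
    (hne : v₁ ≠ v₂) : Disjoint (F.desc v₁) (F.desc v₂) :=
  Set.disjoint_left.mpr fun _ ha₁ ha₂ =>
    (F.anc_total_of_anc ha₁ ha₂).elim (fun h => hne (F.eq_of_anc_of_parent_eq h₁ h₂ h))
      (fun h => hne (F.eq_of_anc_of_parent_eq h₂ h₁ h).symm)

end RootedForest

/-- `r x y` reads "`x` is an ancestor of `y`". -/
structure IsTreeOrder {V : Type} (r : V → V → Prop) : Prop where
  refl : ∀ x, r x x
  trans : ∀ {x y z}, r x y → r y z → r x z
  antisymm : ∀ {x y}, r x y → r y x → x = y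
  total_of_le : ∀ {x y z}, r x z → r y z → r x y ∨ r y x

namespace IsTreeOrder

variable {V : Type} [Finite V] {r : V → V → Prop}

theorem exists_parent (hr : IsTreeOrder r) {v : V} (h : ∃ x, r x v ∧ x ≠ v) :
    ∃ p, p ≠ v ∧ {x | r x v} = insert v {x | r x p} := by
  obtain ⟨p, ⟨hpv, hpne⟩, hmax⟩ :=
    (Set.toFinite {x | r x v ∧ x ≠ v}).exists_maximalFor (fun x => {y | r y x}) _ h
  refine ⟨p, hpne, Set.ext fun x => ⟨fun hx => ?_, ?_⟩⟩
  · by_cases hxv : x = v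
    · exact .inl hxv
    rcases hr.total_of_le hx hpv with h | h
    · exact .inr h
    · exact .inr (hmax ⟨hx, hxv⟩ (fun y hy => hr.trans hy h) (hr.refl x))
  · rintro (rfl | hx)
    · exact hr.refl x
    · exact hr.trans hx hpv

noncomputable def toRootedForest (hr : IsTreeOrder r) : RootedForest V := by
  classical
  exact
  { parent := fun v => if h : ∃ x, r x v ∧ x ≠ v then some (hr.exists_parent h).choose else none
    vdepth := fun v => {x | r x v}.ncard
    vdepth_root := fun v hv => by
      have hv : ∀ x, r x v → x = v := by
        by_contra! h
        simp [h] at hv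
      rw [show {x | r x v} = {v} from Set.ext fun x => ⟨hv x, fun hx => hx ▸ hr.refl v⟩,
        Set.ncard_singleton]
    vdepth_parent := fun v p hp => by
      have h : ∃ x, r x v ∧ x ≠ v := by
        by_contra h
        simp [h] at hp
      simp only [h, dite_true, Option.some_inj] at hp
      obtain ⟨hpv, hset⟩ := hp ▸ (hr.exists_parent h).choose_spec
      have hrpv : p ∈ {x | r x v} := hset ▸ Set.mem_insert_of_mem v (hr.refl p)
      have hvp : v ∉ {x | r x p} := fun hv => hpv (hr.antisymm hrpv hv)
      rw [hset, Set.ncard_insert_of_notMem hvp] }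

theorem toRootedForest_parent_eq_some (hr : IsTreeOrder r) {v p : V}
    (hp : hr.toRootedForest.parent v = some p) :
    p ≠ v ∧ {x | r x v} = insert v {x | r x p} := by
  have h : ∃ x, r x v ∧ x ≠ v := by
    by_contra h
    simp [toRootedForest, h] at hp
  simp only [toRootedForest, h, dite_true, Option.some_inj] at hp
  exact hp ▸ (hr.exists_parent h).choose_spec

theorem exists_toRootedForest_parent_eq_some (hr : IsTreeOrder r) {v : V}
    (h : ∃ x, r x v ∧ x ≠ v) :
    ∃ p, hr.toRootedForest.parent v = some p := by
  simp [toRootedForest, h]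

theorem anc_toRootedForest_iff (hr : IsTreeOrder r) {x y : V} :
    hr.toRootedForest.Anc x y ↔ r x y := by
  refine ⟨fun h => ?_, fun h => ?_⟩
  · induction h with
    | refl => exact hr.refl y
    | tail _ hp ih =>
      have hc := (hr.toRootedForest_parent_eq_some hp).2.ge (.inr (hr.refl _))
      exact hr.trans hc ih
  · induction hn : hr.toRootedForest.vdepth y using Nat.strong_induction_on generalizing y with
    | _ n ih =>
      by_cases hxy : x = y
      · exact hxy ▸ RootedForest.anc_refl _ x
      obtain ⟨p, hp⟩ := hr.exists_toRootedForest_parent_eq_some ⟨x, h, hxy⟩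
      have hxp : r x p := ((hr.toRootedForest_parent_eq_some hp).2.le h).resolve_left hxy
      have := hr.toRootedForest.vdepth_parent y p hp
      exact .head hp (ih _ (by omega) hxp rfl)

end IsTreeOrder

namespace RootedForest

variable {V : Type} (F : RootedForest V) {G : SimpleGraph V} {w x y : V}

variable (G) in
def ConnAnc (x y : V) : Prop :=
  ∃ p : G.Walk y x, ∀ w ∈ p.support, w ∈ F.desc x

theorem ConnAnc.anc (h : F.ConnAnc G x y) : F.Anc x y :=
  let ⟨p, hp⟩ := h
  hp y p.start_mem_support

theorem connAnc_of_mem_support (p : G.Walk y x) (hp : ∀ w ∈ p.support, w ∈ F.desc x)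
    (hw : w ∈ p.support) : F.ConnAnc G x w := by
  classical
  exact ⟨p.dropUntil w hw, fun z hz => hp z (p.support_dropUntil_subset_support hw hz)⟩

variable (G) in
theorem isTreeOrder_connAnc : IsTreeOrder (F.ConnAnc G) where
  refl x := ⟨.nil, by simp [desc, F.anc_refl]⟩
  trans := by
    rintro x y z ⟨p, hp⟩ ⟨q, hq⟩
    refine ⟨q.append p, fun w hw => ?_⟩
    rcases (SimpleGraph.Walk.mem_support_append_iff q p).mp hw with hw | hw
    exacts [F.anc_trans (hp y p.start_mem_support) (hq w hw), hp w hw]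
  antisymm h₁ h₂ := F.anc_antisymm h₁.anc h₂.anc
  total_of_le := by
    have key : ∀ {x y z : V} (p : G.Walk z x) (q : G.Walk z y),
        (∀ w ∈ p.support, w ∈ F.desc x) → (∀ w ∈ q.support, w ∈ F.desc y) → F.Anc x y →
        F.ConnAnc G x y :=
      fun p q hp hq hxy => ⟨q.reverse.append p, fun w hw => by
        rcases (SimpleGraph.Walk.mem_support_append_iff _ p).mp hw with hw | hw
        exacts [F.anc_trans hxy (hq w (by simpa using hw)), hp w hw]⟩
    rintro x y z ⟨p, hp⟩ ⟨q, hq⟩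
    exact (F.anc_total_of_anc (hp z p.start_mem_support) (hq z q.start_mem_support)).imp
      (key p q hp hq) (key q p hq hp)

variable [Finite V]

variable (G) in
/-- The subtree of `x` in `F.connForest G` is the component of `x` in `G[desc_F x]`. -/
noncomputable def connForest : RootedForest V := (F.isTreeOrder_connAnc G).toRootedForest

theorem anc_connForest_iff : (F.connForest G).Anc x y ↔ F.ConnAnc G x y :=
  (F.isTreeOrder_connAnc G).anc_toRootedForest_iff

theorem vdepth_connForest_le (v : V) : (F.connForest G).vdepth v ≤ F.vdepth v := by
  have hsub : (F.connForest G).tail v ⊆ F.tail v := fun _ hx => (F.anc_connForest_iff.mp hx).anc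
  have h := Set.encard_le_encard hsub
  rwa [encard_tail, encard_tail, Nat.cast_le] at h

theorem connected_induce_desc_connForest (x : V) :
    (G.induce ((F.connForest G).desc x)).Connected := by
  refine (SimpleGraph.connected_iff_exists_forall_reachable _).mpr
    ⟨⟨x, (F.connForest G).anc_refl x⟩, fun ⟨a, ha⟩ => ?_⟩
  obtain ⟨p, hp⟩ := F.anc_connForest_iff.mp ha
  have hsub w (hw : w ∈ p.support) : w ∈ (F.connForest G).desc x :=
    F.anc_connForest_iff.mpr (F.connAnc_of_mem_support p hp hw)
  exact ⟨(p.induce _ hsub).reverse⟩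

end RootedForest

namespace SimpleGraph.IsElimForest

variable {V : Type} {G : SimpleGraph V} {F : RootedForest V} {a b v : V}

theorem anc_of_adj_of_not_anc (hF : G.IsElimForest F) (hab : G.Adj a b) (ha : F.Anc v a)
    (hb : ¬ F.Anc v b) : F.Anc b v := by
  rcases hF a b hab with h | h
  · exact absurd (F.anc_trans ha h) hb
  · exact (F.anc_total_of_anc h ha).resolve_right hb

theorem exists_mem_support_anc (hF : G.IsElimForest F) (p : G.Walk a b) (ha : F.Anc v a)
    (hb : ¬ F.Anc v b) : ∃ w ∈ p.support, F.Anc w v ∧ w ≠ v := by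
  obtain ⟨d, hd, h₁, h₂⟩ := p.exists_boundary_dart (F.desc v) ha hb
  exact ⟨d.snd, p.dart_snd_mem_support_of_mem_darts hd, hF.anc_of_adj_of_not_anc d.adj h₁ h₂,
    fun h => h₂ (h ▸ F.anc_refl v)⟩

theorem isTree (hF : G.IsElimForest F) (hG : G.Connected) : F.IsTree := by
  obtain ⟨ρ, -, hρ⟩ := F.exists_anc_parent_eq_none hG.nonempty.some
  refine ⟨ρ, fun v => by_contra fun hv => ?_⟩
  obtain ⟨w, -, hw, hne⟩ :=
    hF.exists_mem_support_anc (hG.preconnected ρ v).some (F.anc_refl ρ) hv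
  exact hne (F.eq_of_anc_of_parent_eq_none hρ hw)

theorem exists_depthLE_treedepth [Finite V] (hF : G.IsElimForest F) :
    ∃ F' : RootedForest V, G.IsElimForest F' ∧ F'.DepthLE G.treedepth := by
  obtain ⟨n, hn⟩ := (Set.finite_range F.vdepth).bddAbove
  exact Nat.sInf_mem (s := {d | ∃ F : RootedForest V, G.IsElimForest F ∧ F.DepthLE d})
    ⟨n, F, hF, fun v => hn ⟨v, rfl⟩⟩

theorem connForest [Finite V] (hF : G.IsElimForest F) : G.IsElimForest (F.connForest G) := by
  intro a b hab
  simp only [RootedForest.anc_connForest_iff]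
  rcases hF a b hab with h | h
  · exact .inl ⟨.cons hab.symm .nil, by simp [RootedForest.desc, h, F.anc_refl]⟩
  · exact .inr ⟨.cons hab .nil, by simp [RootedForest.desc, h, F.anc_refl]⟩

end SimpleGraph.IsElimForest

namespace RootedForest

variable {V : Type} {G : SimpleGraph V} {R T : RootedForest V} {u v₁ v₂ : V}

theorem cl_desc_inter_cl_desc_subset (hT : G.IsElimForest T)
    (hR : ∀ x, (G.induce (R.desc x)).Preconnected) (h₁ : T.parent v₁ = some u)
    (h₂ : T.parent v₂ = some u) (hne : v₁ ≠ v₂) :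
    R.cl (T.desc v₁) ∩ R.cl (T.desc v₂) ⊆ R.cl (T.tail u) := by
  rintro x ⟨hx₁, hx₂⟩
  obtain ⟨a₁, ha₁, hxa₁⟩ := R.mem_cl.mp hx₁
  obtain ⟨a₂, ha₂, hxa₂⟩ := R.mem_cl.mp hx₂
  obtain ⟨p⟩ := hR x ⟨a₁, hxa₁⟩ ⟨a₂, hxa₂⟩
  have ha₂ : ¬ T.Anc v₁ a₂ := (T.disjoint_desc_of_parent_eq h₁ h₂ hne).notMem_of_mem_right ha₂
  obtain ⟨w, hw, hwv, hwne⟩ :=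
    hT.exists_mem_support_anc (p.map (SimpleGraph.Embedding.induce _).toHom) ha₁ ha₂
  rw [SimpleGraph.Walk.support_map, List.mem_map] at hw
  obtain ⟨w, -, rfl⟩ := hw
  exact R.mem_cl.mpr ⟨w, ((T.anc_iff_of_parent h₁).mp hwv).resolve_left hwne, w.2⟩

theorem cl_comp_inter_cl_comp (hT : G.IsElimForest T)
    (hR : ∀ x, (G.induce (R.desc x)).Preconnected) (h₁ : T.parent v₁ = some u)
    (h₂ : T.parent v₂ = some u) (hne : v₁ ≠ v₂) :
    R.cl (T.comp v₁) ∩ R.cl (T.comp v₂) = R.cl (T.tail u) := by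
  rw [T.comp_eq_of_parent h₁, T.comp_eq_of_parent h₂, R.cl_union, R.cl_union,
    ← Set.union_inter_distrib_left]
  exact Set.union_eq_left.mpr (cl_desc_inter_cl_desc_subset hT hR h₁ h₂ hne)

end RootedForest

theorem exists_sensible_elimTree_general {V : Type} [Fintype V] (G : SimpleGraph V)
    (hG : G.Connected) (d : ℕ) (hd : G.treedepth ≤ d)
    (T : RootedForest V) (hT : G.IsElimForest T) :
    ∃ R : RootedForest V, G.IsElimForest R ∧ R.IsTree ∧ R.DepthLE d ∧
      ∀ u v₁ v₂ : V, v₁ ∈ T.chld u → v₂ ∈ T.chld u → v₁ ≠ v₂ →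
        R.cl (T.comp v₁) ∩ R.cl (T.comp v₂) = R.cl (T.tail u) := by
  obtain ⟨F, hF, hFd⟩ := hT.exists_depthLE_treedepth
  refine ⟨F.connForest G, hF.connForest, hF.connForest.isTree hG,
    fun v => ((F.vdepth_connForest_le v).trans (hFd v)).trans hd, fun u v₁ v₂ h₁ h₂ hne => ?_⟩
  exact RootedForest.cl_comp_inter_cl_comp hT
    (fun x => (F.connected_induce_desc_connForest x).preconnected) h₁ h₂ hne

theorem exists_sensible_elimTree {V : Type} [Fintype V] (G : SimpleGraph V)
    (hG : G.Connected) (d : ℕ) (hd : G.treedepth ≤ d)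
    (T : RootedForest V) (hT : G.IsElimForest T) (hTtree : T.IsTree) :
    ∃ R : RootedForest V, G.IsElimForest R ∧ R.IsTree ∧ R.DepthLE d ∧
      ∀ u v₁ v₂ : V, v₁ ∈ T.chld u → v₂ ∈ T.chld u → v₁ ≠ v₂ →
        R.cl (T.comp v₁) ∩ R.cl (T.comp v₂) = R.cl (T.tail u) :=
  exists_sensible_elimTree_general G hG d hd T hT
end

section
/- Let G be a connected graph, T an elimination tree of G, R an elimination tree of G of minimum total vertex depth among elimination trees of depth at most d, and suppose u ∈ V(G) and distinct children v₁, v₂ of u in T are such that there is r ∈ V(G) with r ∈ cl_R(comp_T[v₁]) ∩ cl_R(comp_T[v₂]) but r ∉ cl_R(tail_T[u]). Then the induced subgraph G[tree_R[r]] is disconnected. -/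
namespace RootedForest

variable {V : Type} {F : RootedForest V}

lemma Anc.rfl {a : V} : F.Anc a a := Relation.ReflTransGen.refl

lemma Anc.trans' {a b c : V} (h1 : F.Anc a b) (h2 : F.Anc b c) : F.Anc a c :=
  Relation.ReflTransGen.trans h2 h1

lemma vdepth_le_of_anc_s6 {a b : V} (h : F.Anc a b) : F.vdepth a ≤ F.vdepth b := by
  induction h with
  | refl => exact le_rfl
  | tail h step ih =>
    have := F.vdepth_parent _ _ step
    omega

lemma anc_comparable {x a b : V} (ha : F.Anc a x) (hb : F.Anc b x) :
    F.Anc a b ∨ F.Anc b a := by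
  induction ha with
  | refl => exact Or.inr hb
  | tail h step ih =>
    rcases ih with h1 | h1
    · exact Or.inl (Relation.ReflTransGen.tail h1 step)
    · rcases h1.cases_head with h2 | ⟨c', hc', hrest⟩
      · subst h2; exact Or.inl (Relation.ReflTransGen.single step)
      · rw [step] at hc'
        cases Option.some.inj hc'
        exact Or.inr hrest

/-- If `u` is the parent of `v` and `b` is an ancestor of `v`, then `b = v`
or `b` is an ancestor of `u`. -/
lemma anc_parent {v u b : V} (hp : F.parent v = some u) (h : F.Anc b v) :
    b = v ∨ F.Anc b u := by
  rcases h.cases_head with h2 | ⟨c', hc', hrest⟩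
  · exact Or.inl h2.symm
  · rw [hp] at hc'
    cases Option.some.inj hc'
    exact Or.inr hrest

lemma not_anc_parent {v u : V} (hp : F.parent v = some u) : ¬ F.Anc v u := by
  intro h
  have h1 := vdepth_le_of_anc_s6 h
  have h2 := F.vdepth_parent _ _ hp
  omega

end RootedForest

theorem min_total_depth_violation_gives_disconnected {V : Type} [Fintype V]
    (G : SimpleGraph V) (hG : G.Connected) (d : ℕ) (T R : RootedForest V)
    (hT : G.IsElimForest T) (hTtree : T.IsTree)
    (hR : G.IsElimForest R) (hRtree : R.IsTree) (hRd : R.DepthLE d)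
    (hmin : ∀ R' : RootedForest V, G.IsElimForest R' → R'.IsTree → R'.DepthLE d →
      ∑ u : V, R.vdepth u ≤ ∑ u : V, R'.vdepth u)
    (u v₁ v₂ r : V) (h1 : v₁ ∈ T.chld u) (h2 : v₂ ∈ T.chld u) (hne : v₁ ≠ v₂)
    (hr : r ∈ R.cl (T.comp v₁) ∩ R.cl (T.comp v₂)) (hnr : r ∉ R.cl (T.tail u)) :
    ¬ (G.induce (R.desc r)).Connected := by
    classical
  -- tail_T u is disjoint from desc_R r
  have htail : ∀ x : V, T.Anc x u → ¬ R.Anc r x := by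
    intro x hx hrx
    exact hnr (Set.mem_biUnion hx hrx)
  -- extract witnesses in the subtrees
  have hw : ∀ v : V, v ∈ T.chld u → r ∈ R.cl (T.comp v) →
      ∃ w, T.Anc v w ∧ R.Anc r w := by
    intro v hv hcl
    rw [RootedForest.cl, Set.mem_iUnion₂] at hcl
    obtain ⟨w, hw1, hw2⟩ := hcl
    have hw2' : R.Anc r w := hw2
    rcases hw1 with hw1 | hw1
    · rcases RootedForest.anc_parent hv hw1 with rfl | hwu
      · exact ⟨w, RootedForest.Anc.rfl, hw2'⟩
      · exact absurd hw2' (htail w hwu)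
    · exact ⟨w, hw1, hw2'⟩
  obtain ⟨w₁, hw₁t, hw₁r⟩ := hw v₁ h1 hr.1
  obtain ⟨w₂, hw₂t, hw₂r⟩ := hw v₂ h2 hr.2
  -- subtrees of distinct siblings are disjoint
  have hdisj : ∀ x : V, T.Anc v₁ x → T.Anc v₂ x → False := by
    intro x ha hb
    rcases RootedForest.anc_comparable ha hb with h | h
    · rcases RootedForest.anc_parent h2 h with rfl | h'
      · exact hne rfl
      · exact RootedForest.not_anc_parent h1 h'
    · rcases RootedForest.anc_parent h1 h with rfl | h'
      · exact hne rfl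
      · exact RootedForest.not_anc_parent h2 h'
  -- one step of adjacency inside desc_R r stays in tree_T v₁
  have hstep : ∀ x y : V, y ∈ R.desc r → T.Anc v₁ x → G.Adj x y → T.Anc v₁ y := by
    intro x y hy hx hadj
    rcases hT x y hadj with h | h
    · exact hx.trans' h
    · rcases RootedForest.anc_comparable hx h with h' | h'
      · exact h'
      · rcases RootedForest.anc_parent h1 h' with rfl | h''
        · exact RootedForest.Anc.rfl
        · exact absurd hy (htail y h'')
  intro hconn
  have hmem₁ : w₁ ∈ R.desc r := hw₁r
  have hmem₂ : w₂ ∈ R.desc r := hw₂r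
  obtain ⟨p⟩ := hconn.preconnected ⟨w₁, hmem₁⟩ ⟨w₂, hmem₂⟩
  -- walk induction: everything reachable from w₁ stays in tree_T v₁
  have key : ∀ (a b : R.desc r) (p : (G.induce (R.desc r)).Walk a b),
      T.Anc v₁ (a : V) → T.Anc v₁ (b : V) := by
    intro a b p
    induction p with
    | nil => exact id
    | @cons a c b h p ih =>
      intro ha
      exact ih (hstep a.1 c.1 c.2 ha h)
  exact hdisj w₂ (key _ _ p hw₁t) hw₂t
end

section
/- For every graph G and integer d, td(G) ≤ d if and only if td(G^⟨d⟩) ≤ d, where G^⟨d⟩ is the d-improved graph of G. -/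
/-- The `d`-improved graph of `G`: add an edge between every pair of non-adjacent
vertices having at least `d+1` common neighbours of degree at most `d` in `G`. -/
def improvedGraph {V : Type} [Fintype V] [DecidableEq V] (G : SimpleGraph V)
    [DecidableRel G.Adj] (d : ℕ) : SimpleGraph V :=
  SimpleGraph.fromRel (fun u v => G.Adj u v ∨
    d + 1 ≤ (Finset.univ.filter (fun w => G.Adj u w ∧ G.Adj v w ∧ G.degree w ≤ d)).card)

namespace RootedForest

variable {V' : Type}

lemma anc_trans' (F : RootedForest V') {a b c : V'} (h1 : F.Anc a b) (h2 : F.Anc b c) :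
    F.Anc a c :=
  Relation.ReflTransGen.trans h2 h1

lemma anc_depth' (F : RootedForest V') {a b : V'} (h : F.Anc a b) :
    a = b ∨ F.vdepth a < F.vdepth b := by
  induction h with
  | refl => exact Or.inl rfl
  | tail hbc step ih =>
    right
    have hc := F.vdepth_parent _ _ step
    rcases ih with h | h
    · subst h; omega
    · omega

lemma anc_total' (F : RootedForest V') {a b c : V'} (h1 : F.Anc a c) (h2 : F.Anc b c) :
    F.Anc a b ∨ F.Anc b a := by
  unfold Anc at *
  induction h1 using Relation.ReflTransGen.head_induction_on generalizing b with
  | refl => exact Or.inr h2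
  | @head x y step rest ih =>
    rcases (Relation.ReflTransGen.cases_head h2) with h | ⟨z, hz, hzb⟩
    · subst h
      exact Or.inl (Relation.ReflTransGen.head step rest)
    · have : y = z := by
        rw [step] at hz; exact Option.some_inj.mp hz
      subst this
      exact ih hzb

end RootedForest

/-- A chain forest on a finite type, used to show the treedepth set is nonempty. -/
noncomputable def chainForest (V : Type) [Fintype V] : RootedForest V where
  parent v := if h : (Fintype.equivFin V v : ℕ) = 0 then none
    else some ((Fintype.equivFin V).symm
      ⟨(Fintype.equivFin V v : ℕ) - 1, by
        have := (Fintype.equivFin V v).isLt; omega⟩)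
  vdepth v := (Fintype.equivFin V v : ℕ) + 1
  vdepth_root := by
    intro v h
    by_cases h0 : (Fintype.equivFin V v : ℕ) = 0
    · simp [h0]
    · simp [h0] at h
  vdepth_parent := by
    intro v p h
    by_cases h0 : (Fintype.equivFin V v : ℕ) = 0
    · simp [h0] at h
    · simp only [h0, dite_false, Option.some_inj] at h
      subst h
      simp only [Equiv.apply_symm_apply]
      omega

lemma chainForest_anc (V : Type) [Fintype V] :
    ∀ n : ℕ, ∀ v u : V, (Fintype.equivFin V v : ℕ) = n →
      (Fintype.equivFin V u : ℕ) ≤ (Fintype.equivFin V v : ℕ) →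
      (chainForest V).Anc u v := by
  intro n
  induction n with
  | zero =>
    intro v u hv hle
    have : u = v := by
      apply (Fintype.equivFin V).injective
      apply Fin.ext
      omega
    subst this
    exact Relation.ReflTransGen.refl
  | succ n ih =>
    intro v u hv hle
    by_cases huv : (Fintype.equivFin V u : ℕ) = (Fintype.equivFin V v : ℕ)
    · have : u = v := (Fintype.equivFin V).injective (Fin.ext huv)
      subst this
      exact Relation.ReflTransGen.refl
    · set p := (Fintype.equivFin V).symm
        ⟨(Fintype.equivFin V v : ℕ) - 1, by
          have := (Fintype.equivFin V v).isLt; omega⟩ with hp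
      have hstep : (chainForest V).parent v = some p := by
        simp only [chainForest]
        rw [dif_neg (by omega)]
      have hpv : (Fintype.equivFin V p : ℕ) = n := by
        rw [hp]
        simp only [Equiv.apply_symm_apply]
        omega
      have : (chainForest V).Anc u p := ih p u hpv (by omega)
      exact Relation.ReflTransGen.head hstep this

lemma treedepth_set_nonempty (V : Type) [Fintype V] (G : SimpleGraph V) :
    Fintype.card V ∈ {d | ∃ F : RootedForest V, G.IsElimForest F ∧ F.DepthLE d} := by
  refine ⟨chainForest V, ?_, ?_⟩
  · intro u v _
    rcases le_total ((Fintype.equivFin V u : ℕ)) ((Fintype.equivFin V v : ℕ)) with h | h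
    · exact Or.inl (chainForest_anc V _ v u rfl h)
    · exact Or.inr (chainForest_anc V _ u v rfl h)
  · intro v
    show (Fintype.equivFin V v : ℕ) + 1 ≤ Fintype.card V
    have := (Fintype.equivFin V v).isLt
    omega

lemma treedepth_le_iff {V : Type} [Fintype V] (G : SimpleGraph V) (d : ℕ) :
    G.treedepth ≤ d ↔ ∃ F : RootedForest V, G.IsElimForest F ∧ F.DepthLE d := by
  constructor
  · intro h
    have hne : {d | ∃ F : RootedForest V, G.IsElimForest F ∧ F.DepthLE d}.Nonempty :=
      ⟨_, treedepth_set_nonempty V G⟩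
    obtain ⟨F, hF, hd⟩ := Nat.sInf_mem hne
    exact ⟨F, hF, fun v => le_trans (hd v) h⟩
  · rintro ⟨F, hF, hd⟩
    exact Nat.sInf_le ⟨F, hF, hd⟩

/-- key combinatorial lemma: if `u,v` have `d+1` common neighbours and `F` is a
depth-`≤ d` elimination forest, then `u` and `v` are comparable in `F`. -/
lemma anc_of_common_neighbours {V : Type} [Fintype V] [DecidableEq V]
    (G : SimpleGraph V) [DecidableRel G.Adj] (F : RootedForest V)
    (hF : G.IsElimForest F) (d : ℕ) (hd : F.DepthLE d) (u v : V)
    (h : d + 1 ≤ (Finset.univ.filter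
      (fun w => G.Adj u w ∧ G.Adj v w ∧ G.degree w ≤ d)).card) :
    F.Anc u v ∨ F.Anc v u := by
  by_contra hc
  push_neg at hc
  obtain ⟨h1, h2⟩ := hc
  set S := Finset.univ.filter (fun w => G.Adj u w ∧ G.Adj v w ∧ G.degree w ≤ d) with hS
  have hstr : ∀ w ∈ S, F.Anc w u ∧ w ≠ u := by
    intro w hw
    simp only [hS, Finset.mem_filter, Finset.mem_univ, true_and] at hw
    obtain ⟨huw, hvw, -⟩ := hw
    rcases hF u w huw with hu | hu
    · rcases hF v w hvw with hv | hv
      · rcases F.anc_total' hu hv with h | h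
        · exact absurd h h1
        · exact absurd h h2
      · exact absurd (F.anc_trans' hu hv) h1
    · rcases hF v w hvw with hv | hv
      · exact absurd (F.anc_trans' hv hu) h2
      · exact ⟨hu, fun he => G.irrefl (he ▸ huw)⟩
  have hcard : S.card ≤ d := by
    have hmap : ∀ w ∈ S, F.vdepth w ∈ Finset.range d := by
      intro w hw
      obtain ⟨hanc, hne⟩ := hstr w hw
      rcases F.anc_depth' hanc with he | hlt
      · exact absurd he hne
      · have := hd u
        simp only [Finset.mem_range]
        omega
    have hinj : Set.InjOn F.vdepth S := by
      intro w hw w' hw' heq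
      obtain ⟨ha, -⟩ := hstr w hw
      obtain ⟨ha', -⟩ := hstr w' hw'
      rcases F.anc_total' ha ha' with h | h
      · rcases F.anc_depth' h with he | hlt
        · exact he
        · omega
      · rcases F.anc_depth' h with he | hlt
        · exact he.symm
        · omega
    calc S.card ≤ (Finset.range d).card := Finset.card_le_card_of_injOn F.vdepth hmap hinj
    _ = d := Finset.card_range d
  omega

theorem treedepth_improved_iff {V : Type} [Fintype V] [DecidableEq V]
    (G : SimpleGraph V) [DecidableRel G.Adj] (d : ℕ) :
    G.treedepth ≤ d ↔ (improvedGraph G d).treedepth ≤ d := by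
  rw [treedepth_le_iff, treedepth_le_iff]
  constructor
  · rintro ⟨F, hF, hd⟩
    refine ⟨F, ?_, hd⟩
    intro u v huv
    rw [improvedGraph, SimpleGraph.fromRel_adj] at huv
    obtain ⟨hne, hrel⟩ := huv
    rcases hrel with (h | h) | (h | h)
    · exact hF u v h
    · exact anc_of_common_neighbours G F hF d hd u v h
    · exact (hF v u h).symm
    · exact (anc_of_common_neighbours G F hF d hd v u h).symm
  · rintro ⟨F, hF, hd⟩
    refine ⟨F, ?_, hd⟩
    intro u v huv
    apply hF
    rw [improvedGraph, SimpleGraph.fromRel_adj]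
    exact ⟨huv.ne, Or.inl (Or.inl huv)⟩
end

section
/- Let M be a matching in a graph G, let G_M be obtained from G by contracting all edges of M, and let F' be an elimination forest of G_M of depth at most d. Then G admits an elimination forest of depth at most 2d, obtained by replacing every contracted vertex in F' by the two endpoints of the corresponding matching edge, placed as a parent-child pair. -/
namespace ElimAux
open scoped Classical
noncomputable section

variable {V : Type}

lemma vd_pos (F' : RootedForest V) (v : V) : 1 ≤ F'.vdepth v := by
  cases h : F'.parent v with
  | none => rw [F'.vdepth_root v h]
  | some p => rw [F'.vdepth_parent v p h]; omega

lemma anc_vd (F' : RootedForest V) {u v : V} (h : F'.Anc u v) :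
    F'.vdepth u ≤ F'.vdepth v := by
  induction h with
  | refl => exact le_rfl
  | tail h1 h2 ih =>
    have := F'.vdepth_parent _ _ h2
    omega

def go (c : V → V) (F' : RootedForest V) : ℕ → Option V → Option V
  | 0, _ => none
  | _+1, none => none
  | n+1, some w => if c w = w then some w else go c F' n (F'.parent w)

lemma go_some (c : V → V) (F' : RootedForest V) :
    ∀ n o p, go c F' n o = some p → c p = p ∧ ∃ w, o = some w ∧ F'.Anc p w := by
  intro n
  induction n with
  | zero => intro o p h; simp [go] at h
  | succ n ih =>
    intro o p h
    match o with
    | none => simp [go] at h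
    | some w =>
      rw [go] at h
      split_ifs at h with hw
      · obtain rfl := Option.some.inj h
        exact ⟨hw, w, rfl, Relation.ReflTransGen.refl⟩
      · obtain ⟨hp, w', hw', hanc⟩ := ih _ _ h
        exact ⟨hp, w, rfl, Relation.ReflTransGen.head hw' hanc⟩

def repParent (c : V → V) (F' : RootedForest V) (x : V) : Option V :=
  go c F' (F'.vdepth x) (F'.parent x)

lemma repParent_some (c : V → V) (F' : RootedForest V) {x p : V}
    (h : repParent c F' x = some p) :
    c p = p ∧ F'.Anc p x ∧ F'.vdepth p < F'.vdepth x := by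
  obtain ⟨hp, w, hw, hanc⟩ := go_some c F' _ _ _ h
  have hvw := F'.vdepth_parent x w hw
  have hle := anc_vd F' hanc
  exact ⟨hp, Relation.ReflTransGen.head hw hanc, by omega⟩

lemma go_complete (c : V → V) (F' : RootedForest V) {a : V} (ha : c a = a) :
    ∀ n w, F'.Anc a w → F'.vdepth w ≤ n →
      ∃ p, go c F' n (some w) = some p ∧ F'.Anc a p := by
  intro n
  induction n with
  | zero => intro w _ hw; exact absurd hw (by have := vd_pos F' w; omega)
  | succ n ih =>
    intro w hanc hw
    by_cases hcw : c w = w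
    · exact ⟨w, by rw [go, if_pos hcw], hanc⟩
    · rcases Relation.ReflTransGen.cases_head hanc with h | ⟨w', hw', hanc'⟩
      · exact absurd h (by intro h'; exact hcw (h' ▸ ha))
      · have hv : F'.vdepth w' ≤ n := by have := F'.vdepth_parent w w' hw'; omega
        obtain ⟨p, hgo, hp⟩ := ih w' hanc' hv
        refine ⟨p, ?_, hp⟩
        rw [go, if_neg hcw, hw']
        exact hgo

lemma repParent_complete (c : V → V) (F' : RootedForest V) {a x : V}
    (ha : c a = a) (h : F'.Anc a x) (hne : a ≠ x) :
    ∃ p, repParent c F' x = some p ∧ F'.Anc a p := by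
  rcases Relation.ReflTransGen.cases_head h with h' | ⟨w, hw, hanc⟩
  · exact absurd h'.symm hne
  · have hv := F'.vdepth_parent x w hw
    obtain ⟨p, hgo, hp⟩ := go_complete c F' ha (F'.vdepth x) w hanc (by omega)
    exact ⟨p, by rw [repParent, hw]; exact hgo, hp⟩

noncomputable def mate (c : V → V) (a : V) : Option V :=
  if h : ∃ u, c u = a ∧ u ≠ a then some h.choose else none

lemma mate_some (c : V → V) {a u : V} (h : mate c a = some u) : c u = a ∧ u ≠ a := by
  rw [mate] at h
  split_ifs at h with h'
  · obtain rfl := Option.some.inj h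
    exact h'.choose_spec

lemma mate_eq (c : V → V) (hfib : ∀ u v, c u = c v → u = v ∨ u = c v ∨ v = c u)
    {a u : V} (hu : c u = a) (hne : u ≠ a) : mate c a = some u := by
  have hex : ∃ u, c u = a ∧ u ≠ a := ⟨u, hu, hne⟩
  rw [mate, dif_pos hex]
  obtain ⟨h1, h2⟩ := hex.choose_spec
  rcases hfib hex.choose u (by rw [h1, hu]) with h | h | h
  · rw [h]
  · exact absurd (h.trans hu) h2
  · exact absurd (h.trans h1) hne

noncomputable def parentF (c : V → V) (F' : RootedForest V) (v : V) : Option V :=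
  if c v = v then
    match mate c v with
    | some u => some u
    | none => repParent c F' v
  else repParent c F' (c v)

def muF (c : V → V) (F' : RootedForest V) (v : V) : ℕ :=
  2 * F'.vdepth (c v) + (if c v = v then 1 else 0)

lemma mu_lt (c : V → V) (F' : RootedForest V) {v p : V}
    (h : parentF c F' v = some p) : muF c F' p < muF c F' v := by
  rw [parentF] at h
  split_ifs at h with hv
  · rcases hmc : mate c v with _ | u <;> rw [hmc] at h
    · have h' : repParent c F' v = some p := h
      obtain ⟨hp, _, hlt⟩ := repParent_some c F' h'
      simp [muF, hp, hv]
      omega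
    · have hup : u = p := Option.some.inj h
      subst hup
      obtain ⟨h1, h2⟩ := mate_some c hmc
      have hcu : ¬ c u = u := fun hh => h2 (hh.symm.trans h1)
      have hvd : F'.vdepth (c u) = F'.vdepth (c v) := by rw [h1, hv]
      simp [muF, hcu, hv, hvd]
  · obtain ⟨hp, _, hlt⟩ := repParent_some c F' h
    simp [muF, hp, hv]
    omega

noncomputable def vdepthF (c : V → V) (F' : RootedForest V) (v : V) : ℕ :=
  match h : parentF c F' v with
  | none => 1
  | some p => vdepthF c F' p + 1
termination_by muF c F' v
decreasing_by exact mu_lt c F' h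

lemma vdepthF_none (c : V → V) (F' : RootedForest V) {v : V}
    (h : parentF c F' v = none) : vdepthF c F' v = 1 := by
  rw [vdepthF, h]

lemma vdepthF_some (c : V → V) (F' : RootedForest V) {v p : V}
    (h : parentF c F' v = some p) : vdepthF c F' v = vdepthF c F' p + 1 := by
  rw [vdepthF, h]

lemma vdepthF_le (c : V → V) (F' : RootedForest V) (v : V) :
    vdepthF c F' v + (if c v = v then 0 else 1) ≤ 2 * F'.vdepth (c v) := by
  have main : ∀ n v, muF c F' v < n →
      vdepthF c F' v + (if c v = v then 0 else 1) ≤ 2 * F'.vdepth (c v) := by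
    intro n
    induction n with
    | zero => intro v h; exact absurd h (Nat.not_lt_zero _)
    | succ n ih =>
      intro v hv
      cases hp : parentF c F' v with
      | none =>
        rw [vdepthF_none c F' hp]
        have := vd_pos F' (c v)
        split_ifs <;> omega
      | some p =>
        have hmu := mu_lt c F' hp
        have ihp := ih p (by omega)
        rw [vdepthF_some c F' hp]
        rw [parentF] at hp
        split_ifs at hp with hcv
        · rcases hmc : mate c v with _ | u <;> rw [hmc] at hp
          · have hp' : repParent c F' v = some p := hp
            obtain ⟨hpp, _, hlt⟩ := repParent_some c F' hp'
            simp [hpp] at ihp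
            simp [hcv]
            omega
          · have hup : u = p := Option.some.inj hp
            subst hup
            obtain ⟨h1, h2⟩ := mate_some c hmc
            have hcu : ¬ c u = u := fun hh => h2 (hh.symm.trans h1)
            simp [hcu] at ihp
            have hvd : F'.vdepth (c u) = F'.vdepth (c v) := by rw [h1, hcv]
            have hvv : F'.vdepth (c v) = F'.vdepth v := by rw [hcv]
            simp [hcv]
            omega
        · obtain ⟨hpp, _, hlt⟩ := repParent_some c F' hp
          simp [hpp] at ihp
          simp [hcv]
          omega
  exact main (muF c F' v + 1) v (Nat.lt_succ_self _)

lemma anc_lift (c : V → V) (F' : RootedForest V)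
    (hfib : ∀ u v, c u = c v → u = v ∨ u = c v ∨ v = c u)
    {a b : V} (ha : c a = a) (hb : c b = b) (h : F'.Anc a b) :
    Relation.ReflTransGen (fun x y => parentF c F' x = some y) b a := by
  have main : ∀ n b, F'.vdepth b ≤ n → c b = b → F'.Anc a b →
      Relation.ReflTransGen (fun x y => parentF c F' x = some y) b a := by
    intro n
    induction n with
    | zero => intro b hble _ _; exact absurd hble (by have := vd_pos F' b; omega)
    | succ n ih =>
      intro b hble hcb hanc
      by_cases hab : a = b
      · subst hab; exact Relation.ReflTransGen.refl
      · obtain ⟨p, hrp, hap⟩ := repParent_complete c F' ha hanc hab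
        obtain ⟨hpp, _, hlt⟩ := repParent_some c F' hrp
        have ihp := ih p (by omega) hpp hap
        rcases hmb : mate c b with _ | u
        · have hstep : parentF c F' b = some p := by
            rw [parentF, if_pos hcb, hmb]; exact hrp
          exact Relation.ReflTransGen.head hstep ihp
        · have h1 : parentF c F' b = some u := by
            rw [parentF, if_pos hcb, hmb]
          obtain ⟨hu1, hu2⟩ := mate_some c hmb
          have hcu : ¬ c u = u := fun hh => hu2 (hh.symm.trans hu1)
          have h2 : parentF c F' u = some p := by
            rw [parentF, if_neg hcu, hu1]; exact hrp
          exact Relation.ReflTransGen.head h1 (Relation.ReflTransGen.head h2 ihp)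
  exact main (F'.vdepth b) b le_rfl hb h

end
end ElimAux

theorem elimForest_of_contracted_matching {V : Type} [Fintype V]
    (G : SimpleGraph V) (c : V → V)
    (hidem : ∀ v, c (c v) = c v)
    (hfib : ∀ u v, c u = c v → u = v ∨ u = c v ∨ v = c u)
    (hmatch : ∀ v, c v ≠ v → G.Adj v (c v))
    (d : ℕ) (F' : RootedForest V)
    (hF' : (SimpleGraph.fromRel
        (fun a b => ∃ u v, G.Adj u v ∧ c u = a ∧ c v = b)).IsElimForest F')
    (hd : F'.DepthLE d) :
    ∃ F : RootedForest V, G.IsElimForest F ∧ F.DepthLE (2 * d) := by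
  classical
  have lift : ∀ x y : V, c x ≠ c y → F'.Anc (c x) (c y) →
      Relation.ReflTransGen (fun a b => ElimAux.parentF c F' a = some b) y x := by
    intro x y hxy hanc
    have h1 := ElimAux.anc_lift c F' hfib (hidem x) (hidem y) hanc
    have h2 : Relation.ReflTransGen (fun a b => ElimAux.parentF c F' a = some b) (c y) x := by
      by_cases hx : x = c x
      · rw [hx]; exact h1
      · have hm : ElimAux.mate c (c x) = some x := ElimAux.mate_eq c hfib rfl hx
        have hstep : ElimAux.parentF c F' (c x) = some x := by
          rw [ElimAux.parentF, if_pos (hidem x), hm]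
        exact h1.tail hstep
    by_cases hy : y = c y
    · rw [hy]; exact h2
    · have hm : ElimAux.mate c (c y) = some y := ElimAux.mate_eq c hfib rfl hy
      have hpcv : ElimAux.parentF c F' (c y) = some y := by
        rw [ElimAux.parentF, if_pos (hidem y), hm]
      have hxcy : x ≠ c y := fun hh => hxy (by rw [hh, hidem])
      rcases Relation.ReflTransGen.cases_head h2 with he | ⟨w, hw, hrest⟩
      · exact absurd he.symm hxcy
      · rw [hpcv] at hw
        have hwv : w = y := (Option.some.inj hw).symm
        exact hwv ▸ hrest
  refine ⟨⟨ElimAux.parentF c F', ElimAux.vdepthF c F',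
    fun v h => ElimAux.vdepthF_none c F' h,
    fun v p h => ElimAux.vdepthF_some c F' h⟩, ?_, ?_⟩
  · intro u v huv
    by_cases hcc : c u = c v
    · have hne : u ≠ v := G.ne_of_adj huv
      rcases hfib u v hcc with h | h | h
      · exact absurd h hne
      · right
        have hcu : c u = u := by rw [h, hidem]
        have hm : ElimAux.mate c u = some v :=
          ElimAux.mate_eq c hfib h.symm (fun hh => hne hh.symm)
        have hp : ElimAux.parentF c F' u = some v := by
          rw [ElimAux.parentF, if_pos hcu, hm]
        exact Relation.ReflTransGen.single hp
      · left
        have hcv : c v = v := by rw [h, hidem]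
        have hm : ElimAux.mate c v = some u :=
          ElimAux.mate_eq c hfib h.symm hne
        have hp : ElimAux.parentF c F' v = some u := by
          rw [ElimAux.parentF, if_pos hcv, hm]
        exact Relation.ReflTransGen.single hp
    · have hadj : (SimpleGraph.fromRel
          (fun a b => ∃ u v, G.Adj u v ∧ c u = a ∧ c v = b)).Adj (c u) (c v) := by
        rw [SimpleGraph.fromRel_adj]
        exact ⟨hcc, Or.inl ⟨u, v, huv, rfl, rfl⟩⟩
      rcases hF' (c u) (c v) hadj with h | h
      · left; exact lift u v hcc h
      · right; exact lift v u (Ne.symm hcc) h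
  · intro v
    show ElimAux.vdepthF c F' v ≤ 2 * d
    have h1 := ElimAux.vdepthF_le c F' v
    have h2 := hd (c v)
    split_ifs at h1 <;> omega
end

section
/- Let R be a nonempty subset of a finite set V, with |R| ≤ B. If C : V → {1,…,B} is chosen uniformly at random (each element's color independent and uniform), then with probability at least 1/e there exists a color c with |R ∩ C⁻¹(c)| = 1. -/
/-!
Fix `v ∈ R` and count the colourings under which `v` is the only element of `R` with its colour.
Over each colour `c` of `v` they form a box: `{c}` at `v`, the `B - 1` other colours on the rest of
`R`, anything off `R`. Hence they make up a fraction `(1 - 1/B)^(|R| - 1) ≥ (1 - 1/B)^(B - 1) ≥ 1/e`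
of all colourings, and under each of them the colour class of `v` meets `R` in exactly one point.
-/

open Finset Real

lemma inv_exp_one_le_div_add_one_pow {b k : ℕ} (hk : k ≤ b) :
    (exp 1)⁻¹ ≤ ((b : ℝ) / (b + 1)) ^ k := by
  rcases b.eq_zero_or_pos with rfl | hb
  · rw [Nat.le_zero.1 hk, pow_zero]
    exact inv_le_one_of_one_le₀ (one_le_exp zero_le_one)
  calc (exp 1)⁻¹ ≤ ((1 + (b : ℝ)⁻¹) ^ b)⁻¹ := by
        gcongr
        exact one_add_inv_pow_le_exp
    _ = ((b : ℝ) / (b + 1)) ^ b := by rw [← inv_pow]; congr 1; field_simp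
    _ ≤ ((b : ℝ) / (b + 1)) ^ k :=
        pow_le_pow_of_le_one (by positivity) (div_le_one_of_le₀ (by linarith) (by positivity)) hk

section Isolation
variable {V α : Type*} [Fintype V] [DecidableEq V] [Fintype α] [DecidableEq α]

def isolatingColorings (s : Finset V) (v : V) : Finset (V → α) :=
  {C | ∀ w ∈ s, C w = C v → w = v}

lemma filter_isolatingColorings_eq_piFinset {s : Finset V} {v : V} (hv : v ∈ s) (c : α) :
    (isolatingColorings s v).filter (fun C => C v = c) =
      Fintype.piFinset fun w => if w ∈ s then (if w = v then {c} else univ.erase c) else univ := by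
  ext C
  simp only [isolatingColorings, mem_filter, mem_univ, true_and, Fintype.mem_piFinset]
  constructor
  · rintro ⟨hC, rfl⟩ w
    split_ifs with hws hwv
    · simp [hwv]
    · exact mem_erase.2 ⟨fun h => hwv (hC w hws h), mem_univ _⟩
    · exact mem_univ _
  · intro hC
    have hv' : C v = c := by simpa [hv] using hC v
    refine ⟨fun w hws hw => by_contra fun hwv => ?_, hv'⟩
    simpa [hws, hwv, hw, hv'] using hC w

lemma card_isolatingColorings {s : Finset V} {v : V} (hv : v ∈ s) :
    #(isolatingColorings s v : Finset (V → α)) =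
      Fintype.card α *
        ((Fintype.card α - 1) ^ (#s - 1) * Fintype.card α ^ (Fintype.card V - #s)) := by
  rw [card_eq_sum_card_fiberwise (f := fun C => C v) (t := univ) fun _ _ => mem_univ _,
    ← card_univ, ← smul_eq_mul, ← sum_const]
  refine sum_congr rfl fun c _ => ?_
  rw [filter_isolatingColorings_eq_piFinset hv, Fintype.card_piFinset]
  simp only [apply_ite card, card_singleton, card_erase_of_mem (mem_univ c), card_univ]
  rw [prod_ite, prod_ite]
  simp [filter_ne', card_erase_of_mem hv, filter_notMem_eq_sdiff, card_sdiff]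

lemma card_isolatingColorings_le_card_exists {s : Finset V} {v : V} (hv : v ∈ s) :
    #(isolatingColorings s v : Finset (V → α)) ≤
      Nat.card {C : V → α // ∃ c, #(s.filter fun w => C w = c) = 1} := by
  classical
  rw [Nat.card_eq_fintype_card, Fintype.card_subtype]
  refine card_le_card fun C hC => mem_filter.2 ⟨mem_univ C, C v, card_eq_one.2 ⟨v, ?_⟩⟩
  ext w
  simp only [isolatingColorings, mem_filter, mem_univ, true_and] at hC
  simp only [mem_filter, mem_singleton]
  exact ⟨fun ⟨hws, hw⟩ => hC w hws hw, by rintro rfl; exact ⟨hv, rfl⟩⟩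

end Isolation

theorem color_coding_isolation_general {V : Type} [Fintype V] (B : ℕ)
    (R : Finset V) (hR : R.Nonempty) (hB : R.card ≤ B) :
    (1 : ℝ) / Real.exp 1 ≤
      (Nat.card {C : V → Fin B // ∃ c : Fin B,
          (R.filter (fun v => C v = c)).card = 1} : ℝ) / (B ^ Fintype.card V) := by
  classical
  obtain ⟨v, hv⟩ := hR
  have hR_pos : 0 < #R := card_pos.2 ⟨v, hv⟩
  obtain ⟨b, rfl⟩ : ∃ b, B = b + 1 := Nat.exists_eq_add_one.2 (by omega)
  have hcount := card_isolatingColorings_le_card_exists (α := Fin (b + 1)) hv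
  rw [card_isolatingColorings hv, Fintype.card_fin, Nat.add_sub_cancel] at hcount
  have hsplit : ((b + 1 : ℕ) : ℝ) ^ Fintype.card V =
      (b + 1) ^ (#R - 1) * (b + 1) * (b + 1) ^ (Fintype.card V - #R) := by
    rw [← pow_succ, ← pow_add, Nat.cast_succ]
    congr 1
    have := card_le_univ R
    omega
  calc 1 / exp 1 ≤ ((b : ℝ) / (b + 1)) ^ (#R - 1) := by
        rw [one_div]
        exact inv_exp_one_le_div_add_one_pow (by omega)
    _ = ((b + 1) * (b ^ (#R - 1) * (b + 1) ^ (Fintype.card V - #R)) : ℕ) /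
          ((b + 1 : ℕ) : ℝ) ^ Fintype.card V := by
        rw [hsplit]
        push_cast
        field_simp
        rw [div_pow, div_mul_cancel₀ _ (by positivity)]
    _ ≤ _ := by gcongr

theorem color_coding_isolation {V : Type} [Fintype V] [DecidableEq V] (B : ℕ)
    (R : Finset V) (hR : R.Nonempty) (hB : R.card ≤ B) :
    (1 : ℝ) / Real.exp 1 ≤
      (Nat.card {C : V → Fin B // ∃ c : Fin B,
          (R.filter (fun v => C v = c)).card = 1} : ℝ) / (B ^ Fintype.card V) :=
  color_coding_isolation_general B R hR hB
end
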